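/- Let r, s be real with 0 < s, 2s < r, and r + 5s/3 < 1, and suppose 1/2 + s ≤ r. Let x₂ ∈ (1 − r + s, r − s). Then the points (0, x₂) and (1 − x₂, 1 − x₂) lie in the closed region D1 = {(y₁, y₂) : 0 ≤ y₁ ≤ y₂ ≤ r − s}, the point (x₂, 1) lies in the closed region D11 = {(y₁, y₂) : s ≤ y₁ ≤ r − 3(1 − y₂)/4, 1 − 4s/3 ≤ y₂ ≤ 1}, and F₁(0, x₂) = (1 − x₂, 1 − x₂), F₁(1 − x₂, 1 − x₂) = (x₂, 1), F₁₁(x₂, 1) = (0, x₂). Thus there is a one-parameter family of period-3 orbits lying on the edges of the simplex, with symbolic code 1 → 1 → 11. -/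

import Mathlib

/-!
Along the edges of the simplex the branches act as `(0, x) ↦ (1 - x, 1 - x) ↦ (x, 1) ↦ (0, x)`,
so every such triple is a period-3 orbit of the affine branches. The constraint `r + 5s/3 < 1`
gives `s < 1 - r`, and the window `1 - r + s < x < r - s` is exactly what keeps all three points
inside the closed regions `D1`, `D1` and `D11`.
-/

/-- The affine branch of the return-time map on region 1. -/
noncomputable def F1 (p : ℝ × ℝ) : ℝ × ℝ :=
  (1 - p.2, 1 - p.2 + p.1)

/-- The affine branch of the return-time map on region 11. -/
noncomputable def F11 (p : ℝ × ℝ) : ℝ × ℝ :=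
  (3*(1 - p.2)/4, p.1 + 3*(1 - p.2)/4)

/-- The closed region D1. -/
def D1 (r s : ℝ) : Set (ℝ × ℝ) :=
  {p | 0 ≤ p.1 ∧ p.1 ≤ p.2 ∧ p.2 ≤ r - s}

/-- The closed region D11. -/
def D11 (r s : ℝ) : Set (ℝ × ℝ) :=
  {p | s ≤ p.1 ∧ p.1 ≤ r - 3*(1 - p.2)/4 ∧ 1 - 4*s/3 ≤ p.2 ∧ p.2 ≤ 1}

theorem F1_zero_fst (x : ℝ) : F1 (0, x) = (1 - x, 1 - x) := by
  simp [F1]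

theorem F1_diag (y : ℝ) : F1 (y, y) = (1 - y, 1) := by
  simp [F1]

theorem F11_snd_one (x : ℝ) : F11 (x, 1) = (0, x) := by
  simp [F11]

theorem zero_fst_mem_D1_iff (r s x : ℝ) : ((0 : ℝ), x) ∈ D1 r s ↔ 0 ≤ x ∧ x ≤ r - s := by
  simp [D1]

theorem diag_mem_D1_iff (r s y : ℝ) : (y, y) ∈ D1 r s ↔ 0 ≤ y ∧ y ≤ r - s := by
  simp [D1]

theorem snd_one_mem_D11_iff (r s x : ℝ) : (x, (1 : ℝ)) ∈ D11 r s ↔ s ≤ x ∧ x ≤ r ∧ 0 ≤ s := by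
  simp only [D11, Set.mem_ofPred_eq, sub_self, mul_zero, zero_div, sub_zero, le_refl, and_true]
  constructor <;> rintro ⟨h₁, h₂, h₃⟩ <;> exact ⟨h₁, h₂, by linarith⟩

theorem edge_period3_family_1_1_11_general (r s x₂ : ℝ)
    (hs : 0 < s) (h1 : r + 5*s/3 < 1)
    (hx2lo : 1 - r + s < x₂) (hx2hi : x₂ < r - s) :
    ((0 : ℝ), x₂) ∈ D1 r s ∧
    (1 - x₂, 1 - x₂) ∈ D1 r s ∧
    (x₂, (1 : ℝ)) ∈ D11 r s ∧
    F1 (0, x₂) = (1 - x₂, 1 - x₂) ∧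
    F1 (1 - x₂, 1 - x₂) = (x₂, 1) ∧
    F11 (x₂, 1) = (0, x₂) := by
  have hs_lt : s < 1 - r := by linarith
  refine ⟨(zero_fst_mem_D1_iff r s x₂).2 ⟨by linarith, hx2hi.le⟩,
    (diag_mem_D1_iff r s _).2 ⟨by linarith, by linarith⟩,
    (snd_one_mem_D11_iff r s x₂).2 ⟨by linarith, by linarith, hs.le⟩,
    F1_zero_fst x₂, ?_, F11_snd_one x₂⟩
  rw [F1_diag, sub_sub_cancel]

theorem edge_period3_family_1_1_11 (r s x₂ : ℝ)
    (hs : 0 < s) (hrs : 2*s < r) (h1 : r + 5*s/3 < 1) (hlo : 1/2 + s ≤ r)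
    (hx2lo : 1 - r + s < x₂) (hx2hi : x₂ < r - s) :
    ((0 : ℝ), x₂) ∈ D1 r s ∧
    (1 - x₂, 1 - x₂) ∈ D1 r s ∧
    (x₂, (1 : ℝ)) ∈ D11 r s ∧
    F1 (0, x₂) = (1 - x₂, 1 - x₂) ∧
    F1 (1 - x₂, 1 - x₂) = (x₂, 1) ∧
    F11 (x₂, 1) = (0, x₂) :=
  edge_period3_family_1_1_11_general r s x₂ hs h1 hx2lo hx2hi
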